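/- arXiv:math/0209230 — 5 statements merged into one kernel-verified Lean document; each statement's English description precedes it below -/
import Mathlib

section
/- Let f : X → Y be a perfect continuous surjection between metrizable spaces, ω an open cover of X, m and p positive integers, and g ∈ C(X, I^p). If the restriction of f△g to the fiber f⁻¹(y) is an (m,ω)-map for some y ∈ Y, then there exists a neighborhood U_y of y in Y such that the restriction g|f⁻¹(U_y) is an (m,ω)-map. -/
/-!
Over a point `z` of the compact cube, take a closed neighborhood `W` whose trace on the fiber
`f⁻¹ y` is covered by `m` members of `ω` (the empty family if `z ∉ g(f⁻¹ y)`). The part of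
`g⁻¹ W` left uncovered is closed and misses the fiber, so its image under the closed map `f`
misses `y`; its complement is a neighborhood of `y` over which the same `m` sets still cover.
Finitely many interiors of such `W` cover the cube, and the intersection of the corresponding
neighborhoods of `y` is the required `U_y`.
-/

open Set Topology

noncomputable section

/-- The unit cube `I^n` inside Euclidean `n`-space (with the Euclidean metric). -/
abbrev Cube (n : ℕ) : Type :=
  {x : EuclideanSpace ℝ (Fin n) // ∀ i, x i ∈ Set.Icc (0 : ℝ) 1}

/-- `CovDimLE X n` : the covering (Lebesgue) dimension of `X` is at most `n`, i.e. every
finite open cover of `X` admits an open shrinking of order at most `n + 1`. -/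
def CovDimLE (X : Type) [TopologicalSpace X] (n : ℕ) : Prop :=
  ∀ (ι : Type) (_ : Finite ι) (U : ι → Set X),
    (∀ i, IsOpen (U i)) → (⋃ i, U i) = Set.univ →
      ∃ V : ι → Set X, (∀ i, IsOpen (V i)) ∧ (∀ i, V i ⊆ U i) ∧ (⋃ i, V i) = Set.univ ∧
        ∀ x : X, {i | x ∈ V i}.ncard ≤ n + 1

/-- A map is `k`-dimensional if all of its fibers have covering dimension at most `k`. -/
def DimFibersLE {X Y : Type} [TopologicalSpace X] [TopologicalSpace Y]
    (f : X → Y) (k : ℕ) : Prop :=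
  ∀ y : Y, CovDimLE (f ⁻¹' {y}) k

/-- A perfect map: continuous, closed, with compact fibers. -/
def IsPerfectMap {X Y : Type} [TopologicalSpace X] [TopologicalSpace Y] (f : X → Y) : Prop :=
  Continuous f ∧ IsClosedMap f ∧ ∀ y : Y, IsCompact (f ⁻¹' {y})

/-- `f` is σ-perfect: `X` is a countable union of closed sets `A i` such that each
restriction `f|A i : A i → f(A i)` is perfect. -/
def IsSigmaPerfect {X Y : Type} [TopologicalSpace X] [TopologicalSpace Y] (f : X → Y) : Prop :=
  ∃ A : ℕ → Set X, (∀ i, IsClosed (A i)) ∧ (⋃ i, A i) = Set.univ ∧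
    ∀ i, IsPerfectMap fun x : A i => (⟨f x, Set.mem_image_of_mem f x.2⟩ : f '' A i)

/-- The source limitation topology on `C(X, M)`. -/
def sourceLimitation (X M : Type) [TopologicalSpace X] [MetricSpace M] :
    TopologicalSpace C(X, M) where
  IsOpen U := ∀ g ∈ U, ∃ α : X → ℝ, Continuous α ∧ (∀ x, 0 < α x) ∧
      {h : C(X, M) | ∀ x, dist (g x) (h x) ≤ α x} ⊆ U
  isOpen_univ := fun _ _ =>
    ⟨fun _ => 1, continuous_const, fun _ => one_pos, fun _ _ => trivial⟩
  isOpen_inter := by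
    intro U V hU hV g hg
    obtain ⟨α, hαc, hα0, hαU⟩ := hU g hg.1
    obtain ⟨β, hβc, hβ0, hβV⟩ := hV g hg.2
    refine ⟨fun x => min (α x) (β x), hαc.min hβc, fun x => lt_min (hα0 x) (hβ0 x), ?_⟩
    intro h hh
    exact ⟨hαU fun x => le_trans (hh x) (min_le_left _ _),
      hβV fun x => le_trans (hh x) (min_le_right _ _)⟩
  isOpen_sUnion := by
    intro S hS g hg
    obtain ⟨t, ht, hgt⟩ := hg
    obtain ⟨α, h1, h2, h3⟩ := hS t ht g hgt
    exact ⟨α, h1, h2, fun h hh => ⟨t, ht, h3 hh⟩⟩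

/-- The topology of uniform convergence on `C(X, M)`. -/
def uniformConvergence (X M : Type) [TopologicalSpace X] [UniformSpace M] :
    TopologicalSpace C(X, M) :=
  TopologicalSpace.induced (fun g : C(X, M) => UniformFun.ofFun ⇑g) inferInstance

/-- The uniformity of uniform convergence on `C(X, M)`. -/
def uniformConvergenceUniformity (X M : Type) [TopologicalSpace X] [UniformSpace M] :
    UniformSpace C(X, M) :=
  UniformSpace.comap (fun g : C(X, M) => UniformFun.ofFun ⇑g) inferInstance

/-- `g` restricted to `H` is an `(m, ω)`-map: every point of `g(H)` has a neighborhood `V`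
such that the part of `g ⁻¹ V` lying in `H` can be covered by at most `m` members of `ω`. -/
def IsMOmegaMapOn {X Z : Type} [TopologicalSpace X] [TopologicalSpace Z]
    (m : ℕ) (ω : Set (Set X)) (g : X → Z) (H : Set X) : Prop :=
  ∀ z ∈ g '' H, ∃ V ∈ nhds z, ∃ s : Finset (Set X),
    ↑s ⊆ ω ∧ s.card ≤ m ∧ H ∩ g ⁻¹' V ⊆ ⋃₀ ↑s

/-- A closed set `F` in `M` is a `Z_n`-set if the maps `I^n → M` avoiding `F` are dense in
`C(I^n, M)` with the uniform convergence topology. -/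
def IsZSet (n : ℕ) (M : Type) [UniformSpace M] (F : Set M) : Prop :=
  IsClosed F ∧
    @Dense C(Cube n, M)
      (TopologicalSpace.induced (fun u : C(Cube n, M) => UniformFun.ofFun ⇑u) inferInstance)
      {u : C(Cube n, M) | ∀ t, u t ∉ F}

end

def CoverableBy {X : Type} (m : ℕ) (ω : Set (Set X)) (A : Set X) : Prop :=
  ∃ s : Finset (Set X), ↑s ⊆ ω ∧ s.card ≤ m ∧ A ⊆ ⋃₀ ↑s

theorem CoverableBy.mono {X : Type} {m : ℕ} {ω : Set (Set X)} {A B : Set X} (hAB : A ⊆ B)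
    (hB : CoverableBy m ω B) : CoverableBy m ω A :=
  let ⟨s, hsω, hcard, hBs⟩ := hB
  ⟨s, hsω, hcard, hAB.trans hBs⟩

theorem IsClosedMap.exists_mem_nhds_preimage_inter_subset {X Y : Type} [TopologicalSpace X]
    [TopologicalSpace Y] {f : X → Y} (hf : IsClosedMap f) {F O : Set X} (hF : IsClosed F)
    (hO : IsOpen O) {y : Y} (h : f ⁻¹' {y} ∩ F ⊆ O) : ∃ U ∈ 𝓝 y, f ⁻¹' U ∩ F ⊆ O := by
  refine ⟨(f '' (F \ O))ᶜ, (hf _ (hF.sdiff hO)).isOpen_compl.mem_nhds ?_, ?_⟩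
  · rintro ⟨x, ⟨hxF, hxO⟩, rfl⟩
    exact hxO (h ⟨rfl, hxF⟩)
  · rintro x ⟨hxU, hxF⟩
    by_contra hxO
    exact hxU ⟨x, ⟨hxF, hxO⟩, rfl⟩

theorem IsCompact.exists_mem_forall_exists_mem_nhds {α Z : Type} [TopologicalSpace Z]
    {K : Set Z} (hK : IsCompact K) {l : Filter α} {p : Set α → Set Z → Prop}
    (hp : ∀ ⦃U U'⦄, U' ⊆ U → ∀ V, p U V → p U' V)
    (h : ∀ z ∈ K, ∃ U ∈ l, ∃ V ∈ 𝓝 z, p U V) : ∃ U ∈ l, ∀ z ∈ K, ∃ V ∈ 𝓝 z, p U V := by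
  refine hK.induction_on (p := fun S => ∃ U ∈ l, ∀ z ∈ S, ∃ V ∈ 𝓝 z, p U V)
    ⟨univ, Filter.univ_mem, fun _ => False.elim⟩ ?_ ?_ ?_
  · exact fun S T hST ⟨U, hU, hT⟩ => ⟨U, hU, fun z hz => hT z (hST hz)⟩
  · rintro S T ⟨U, hU, hS⟩ ⟨U', hU', hT⟩
    refine ⟨U ∩ U', Filter.inter_mem hU hU', ?_⟩
    rintro z (hz | hz)
    · obtain ⟨V, hV, hUV⟩ := hS z hz
      exact ⟨V, hV, hp inter_subset_left V hUV⟩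
    · obtain ⟨V, hV, hUV⟩ := hT z hz
      exact ⟨V, hV, hp inter_subset_right V hUV⟩
  · intro z hz
    obtain ⟨U, hU, V, hV, hUV⟩ := h z hz
    exact ⟨interior V, mem_nhdsWithin_of_mem_nhds (interior_mem_nhds.mpr hV),
      U, hU, fun z' hz' => ⟨V, mem_interior_iff_mem_nhds.mp hz', hUV⟩⟩

section IsMOmegaMapOn

variable {X Z W : Type} [TopologicalSpace X] [TopologicalSpace Z] [TopologicalSpace W]
  {m : ℕ} {ω : Set (Set X)} {g : X → Z} {H : Set X}

theorem IsMOmegaMapOn.congr {g' : X → Z} (h : IsMOmegaMapOn m ω g H) (hgg' : EqOn g g' H) :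
    IsMOmegaMapOn m ω g' H := by
  rintro _ ⟨x, hx, rfl⟩
  obtain ⟨V, hV, hcov⟩ := h (g x) ⟨x, hx, rfl⟩
  rw [hgg' hx] at hV
  refine ⟨V, hV, CoverableBy.mono ?_ hcov⟩
  rintro x' ⟨hx', hx'V⟩
  exact ⟨hx', by rwa [mem_preimage, hgg' hx']⟩

theorem IsMOmegaMapOn.of_comp {φ : Z → W} (hφ : Continuous φ)
    (h : IsMOmegaMapOn m ω (φ ∘ g) H) : IsMOmegaMapOn m ω g H := by
  rintro _ ⟨x, hx, rfl⟩
  obtain ⟨V, hV, hcov⟩ := h (φ (g x)) ⟨x, hx, rfl⟩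
  exact ⟨φ ⁻¹' V, hφ.continuousAt hV, hcov⟩

theorem IsMOmegaMapOn.exists_mem_nhds_coverableBy [T2Space Z] (h : IsMOmegaMapOn m ω g H)
    (hH : IsCompact H) (hg : ContinuousOn g H) (z : Z) :
    ∃ V ∈ 𝓝 z, CoverableBy m ω (H ∩ g ⁻¹' V) := by
  by_cases hz : z ∈ g '' H
  · exact h z hz
  · refine ⟨(g '' H)ᶜ, (hH.image_of_continuousOn hg).isClosed.isOpen_compl.mem_nhds hz,
      ∅, by simp, by simp, ?_⟩
    rintro x ⟨hxH, hxV⟩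
    exact absurd ⟨x, hxH, rfl⟩ hxV

theorem IsMOmegaMapOn.exists_mem_nhds_preimage [CompactSpace Z] [T2Space Z] {Y : Type}
    [TopologicalSpace Y] {f : X → Y} {y : Y} (h : IsMOmegaMapOn m ω g (f ⁻¹' {y}))
    (hf : IsClosedMap f) (hfy : IsCompact (f ⁻¹' {y})) (hg : Continuous g)
    (hω : ∀ U ∈ ω, IsOpen U) : ∃ U ∈ 𝓝 y, IsMOmegaMapOn m ω g (f ⁻¹' U) := by
  have hlocal : ∀ z ∈ (univ : Set Z), ∃ U ∈ 𝓝 y, ∃ V ∈ 𝓝 z,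
      CoverableBy m ω (f ⁻¹' U ∩ g ⁻¹' V) := by
    intro z _
    obtain ⟨V, hV, hcov⟩ := h.exists_mem_nhds_coverableBy hfy hg.continuousOn z
    obtain ⟨W, hW, hWclosed, hWV⟩ := exists_mem_nhds_isClosed_subset hV
    obtain ⟨s, hsω, hcard, hs⟩ := hcov.mono (inter_subset_inter_right _ (preimage_mono hWV))
    obtain ⟨U, hU, hUW⟩ := hf.exists_mem_nhds_preimage_inter_subset
      (hWclosed.preimage hg) (isOpen_sUnion fun u hu => hω u (hsω hu)) hs
    exact ⟨U, hU, W, hW, s, hsω, hcard, hUW⟩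
  obtain ⟨U, hU, hUV⟩ := isCompact_univ.exists_mem_forall_exists_mem_nhds
    (fun U U' hU'U V hUV => hUV.mono (inter_subset_inter_left _ (preimage_mono hU'U))) hlocal
  exact ⟨U, hU, fun z _ => hUV z (mem_univ z)⟩

end IsMOmegaMapOn

instance (p : ℕ) : CompactSpace (Cube p) := by
  refine isCompact_iff_compactSpace.mp ?_
  convert (EuclideanSpace.equiv (Fin p) ℝ).toHomeomorph.isCompact_preimage.mpr
    (isCompact_Icc (a := 0) (b := 1))
  simp [forall_and]
  rfl

theorem statement6_general {X Y : Type} [TopologicalSpace X] [TopologicalSpace Y]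
    (f : X → Y) (hperf : IsPerfectMap f)
    (ω : Set (Set X)) (hω : ∀ U ∈ ω, IsOpen U)
    (m p : ℕ) (g : C(X, Cube p)) (y : Y)
    (h : IsMOmegaMapOn m ω (fun x => (f x, g x)) (f ⁻¹' {y})) :
    ∃ U ∈ nhds y, IsMOmegaMapOn m ω (⇑g) (f ⁻¹' U) := by
  have hfiber : IsMOmegaMapOn m ω (⇑g) (f ⁻¹' {y}) :=
    (h.congr fun x (hx : f x = y) => by simp [hx]).of_comp (φ := Prod.mk y) (by fun_prop)
  exact hfiber.exists_mem_nhds_preimage hperf.2.1 (hperf.2.2 y) g.continuous hω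

/-- Lemma 2.2: let `f : X → Y` be a perfect continuous surjection of metrizable spaces, `ω` an
open cover of `X`, `m, p` positive integers, `g ∈ C(X, I^p)`. If `(f △ g)|f⁻¹(y)` is an
`(m, ω)`-map for some `y`, then there is a neighborhood `U` of `y` such that `g|f⁻¹(U)` is an
`(m, ω)`-map. -/
theorem statement6 {X Y : Type} [TopologicalSpace X] [TopologicalSpace Y]
    [TopologicalSpace.MetrizableSpace X] [TopologicalSpace.MetrizableSpace Y]
    (f : X → Y) (hsurj : Function.Surjective f) (hperf : IsPerfectMap f)
    (ω : Set (Set X)) (hω : ∀ U ∈ ω, IsOpen U) (hcov : ⋃₀ ω = Set.univ)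
    (m p : ℕ) (hm : 1 ≤ m) (hp : 1 ≤ p) (g : C(X, Cube p)) (y : Y)
    (h : IsMOmegaMapOn m ω (fun x => (f x, g x)) (f ⁻¹' {y})) :
    ∃ U ∈ nhds y, IsMOmegaMapOn m ω (⇑g) (f ⁻¹' U) :=
  statement6_general f hperf ω hω m p g y h
end

section
/- Let f : X → Y be a perfect continuous surjection between metrizable spaces, ω an open cover of X, and m, p positive integers. If g ∈ C(X, I^p) is such that for every y ∈ Y the restriction of f△g to the fiber f⁻¹(y) is an (m,ω)-map, then f△g : X → Y × I^p is itself an (m,ω)-map. -/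
open Set Topology

/-!
The map `f △ g` factors as the closed embedding `x ↦ (x, g x)` followed by the perfect map
`f × id`, so it is perfect, in particular closed. For a closed map, an open set containing a fiber
contains the whole preimage of a neighbourhood of the fiber's image point; applied to the union of
the `m` members of `ω` that cover the fiber of `f △ g` over `(f x, g x)` (which lies inside the
fiber of `f` over `f x`), this gives the neighbourhood required of an `(m, ω)`-map.
-/

open Filter

section ProperMaps

variable {X Y Z : Type*} [TopologicalSpace X] [TopologicalSpace Y] [TopologicalSpace Z]

theorem isClosedEmbedding_graph [T2Space Y] {f : X → Y} (hf : Continuous f) :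
    IsClosedEmbedding fun x => (x, f x) := by
  refine ⟨isEmbedding_graph hf, ?_⟩
  have hrange : range (fun x => (x, f x)) = {q : X × Y | f q.1 = q.2} := by
    ext ⟨a, b⟩
    simp [Prod.ext_iff, eq_comm]
  rw [hrange]
  exact isClosed_eq (hf.comp continuous_fst) continuous_snd

theorem IsProperMap.prodMk [T2Space Z] {f : X → Y} {g : X → Z} (hf : IsProperMap f)
    (hg : Continuous g) : IsProperMap fun x => (f x, g x) :=
  (hf.prodMap isProperMap_id).comp (isClosedEmbedding_graph hg).isProperMap

theorem IsClosedMap.exists_mem_nhds_preimage_subset {f : X → Y} (hf : IsClosedMap f) {y : Y}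
    {U : Set X} (hU : IsOpen U) (hfiber : f ⁻¹' {y} ⊆ U) : ∃ V ∈ 𝓝 y, f ⁻¹' V ⊆ U :=
  mem_comap.mp (hf.comap_nhds_le (hU.mem_nhdsSet.mpr hfiber))

end ProperMaps

section MOmegaMaps

variable {X Y Z : Type} [TopologicalSpace X] [TopologicalSpace Y] [TopologicalSpace Z] {m : ℕ}
  {ω : Set (Set X)} {F : X → Z}

theorem IsPerfectMap.isProperMap {f : X → Y} (hf : IsPerfectMap f) : IsProperMap f :=
  isProperMap_iff_isClosedMap_and_compact_fibers.mpr hf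

theorem IsMOmegaMapOn.exists_cover_fiber {H : Set X}
    (hF : IsMOmegaMapOn m ω F H) {z : Z} (hz : z ∈ F '' H) :
    ∃ s : Finset (Set X), ↑s ⊆ ω ∧ s.card ≤ m ∧ H ∩ F ⁻¹' {z} ⊆ ⋃₀ ↑s := by
  obtain ⟨V, hV, s, hsω, hs, hsub⟩ := hF z hz
  refine ⟨s, hsω, hs, fun x ⟨hxH, hx⟩ => hsub ⟨hxH, ?_⟩⟩
  rw [mem_preimage, mem_singleton_iff.mp hx]
  exact mem_of_mem_nhds hV

theorem IsClosedMap.isMOmegaMapOn_univ (hF : IsClosedMap F) (hω : ∀ U ∈ ω, IsOpen U)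
    (hfiber : ∀ z ∈ range F, ∃ s : Finset (Set X), ↑s ⊆ ω ∧ s.card ≤ m ∧ F ⁻¹' {z} ⊆ ⋃₀ ↑s) :
    IsMOmegaMapOn m ω F univ := by
  rintro z ⟨x, -, rfl⟩
  obtain ⟨s, hsω, hs, hsub⟩ := hfiber (F x) (mem_range_self x)
  have hopen : IsOpen (⋃₀ (s : Set (Set X))) := isOpen_sUnion fun U hU => hω U (hsω hU)
  obtain ⟨V, hV, hVsub⟩ := hF.exists_mem_nhds_preimage_subset hopen hsub
  exact ⟨V, hV, s, hsω, hs, fun x' hx' => hVsub hx'.2⟩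

end MOmegaMaps

theorem statement7_general {X Y : Type} [TopologicalSpace X] [TopologicalSpace Y]
    (f : X → Y) (hperf : IsPerfectMap f)
    (ω : Set (Set X)) (hω : ∀ U ∈ ω, IsOpen U)
    (m p : ℕ) (g : C(X, Cube p))
    (h : ∀ y : Y, IsMOmegaMapOn m ω (fun x => (f x, g x)) (f ⁻¹' {y})) :
    IsMOmegaMapOn m ω (fun x => (f x, g x)) Set.univ := by
  have hproper : IsProperMap fun x => (f x, g x) := hperf.isProperMap.prodMk g.continuous
  refine hproper.isClosedMap.isMOmegaMapOn_univ hω ?_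
  rintro _ ⟨x, rfl⟩
  obtain ⟨s, hsω, hs, hsub⟩ := (h (f x)).exists_cover_fiber ⟨x, rfl, rfl⟩
  exact ⟨s, hsω, hs, fun x' hx' => hsub ⟨congrArg Prod.fst hx', hx'⟩⟩

/-- Corollary 2.3: let `f : X → Y` be a perfect continuous surjection of metrizable spaces, `ω`
an open cover of `X`, `m, p` positive integers. If `g ∈ C(X, I^p)` is such that
`(f △ g)|f⁻¹(y)` is an `(m, ω)`-map for every `y ∈ Y`, then `f △ g` is an `(m, ω)`-map. -/
theorem statement7 {X Y : Type} [TopologicalSpace X] [TopologicalSpace Y]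
    [TopologicalSpace.MetrizableSpace X] [TopologicalSpace.MetrizableSpace Y]
    (f : X → Y) (hsurj : Function.Surjective f) (hperf : IsPerfectMap f)
    (ω : Set (Set X)) (hω : ∀ U ∈ ω, IsOpen U) (hcov : ⋃₀ ω = Set.univ)
    (m p : ℕ) (hm : 1 ≤ m) (hp : 1 ≤ p) (g : C(X, Cube p))
    (h : ∀ y : Y, IsMOmegaMapOn m ω (fun x => (f x, g x)) (f ⁻¹' {y})) :
    IsMOmegaMapOn m ω (fun x => (f x, g x)) Set.univ :=
  statement7_general f hperf ω hω m p g h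
end

section
/- Let f : X → Y be a perfect continuous surjection between metrizable spaces, ω an open cover of X, and m, p positive integers. Then for any closed subset K ⊆ X, the set C_{(m,ω)}(X|K, I^p) = {g ∈ C(X, I^p) : the restriction of f△g to K is an (m,ω)-map} is open in C(X, I^p) with respect to the source limitation topology. -/
open Set Topology

/-! The `(m, ω)`-property of `f △ g` on `K` is uniform near each fibre. The compact set
`C = (f △ g)(K ∩ f⁻¹(y))` has a Lebesgue number `δ` for the open sets whose preimages in `K` are
covered by `m` members of `ω`, and since `f` is closed, `(f △ g)(K ∩ f⁻¹(O_y))` stays `δ/2`-close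
to `C` for some neighbourhood `O_y` of `y`. Hence, with `ε_y = δ/2`, the points of `K` over `O_y`
whose `g`-values are `ε_y`-close to that of a fixed `x₀` are covered by `m` members of `ω`.
Since `Y` is paracompact, a partition of unity gives a continuous `β > 0` on `Y` which near every
point is below `ε_y / 3` on some `O_y`, and by the triangle inequality every `h` with
`d(g, h) ≤ β ∘ f` is still an `(m, ω)`-map on `K`. -/

open Filter Metric

section

variable {X Y Z : Type} [TopologicalSpace X] [PseudoMetricSpace Z] {m : ℕ} {ω : Set (Set X)}
  {K : Set X}

theorem IsClosedMap.eventually_mapsTo_fiber {W : Type} [TopologicalSpace Y] [TopologicalSpace W]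
    {f : X → Y} {F : X → W} (hf : IsClosedMap f) (hF : Continuous F) (hK : IsClosed K)
    {T : Set W} (hT : IsOpen T) {y : Y} (hKT : MapsTo F (K ∩ f ⁻¹' {y}) T) :
    ∀ᶠ y' in 𝓝 y, MapsTo F (K ∩ f ⁻¹' {y'}) T := by
  refine (hf.eventually_nhds_fiber (p := fun x => x ∈ K → F x ∈ T) y fun x₀ hx₀ => ?_).mono
    fun y' hy' x hx => hy' x hx.2 hx.1
  by_cases hx₀K : x₀ ∈ K
  · exact eventually_of_mem (hF.continuousAt.preimage_mem_nhds (hT.mem_nhds (hKT ⟨hx₀K, hx₀⟩)))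
      fun x hx _ => hx
  · exact eventually_of_mem (hK.isOpen_compl.mem_nhds hx₀K) fun x hx hxK => absurd hxK hx

theorem IsMOmegaMapOn.exists_uniform_nhds [PseudoMetricSpace Y] {f : X → Y} {g : X → Z}
    (hf : IsPerfectMap f) (hg : Continuous g) (hK : IsClosed K)
    (hfg : IsMOmegaMapOn m ω (fun x => (f x, g x)) K) (y : Y) :
    ∃ ε > 0, ∃ O, IsOpen O ∧ y ∈ O ∧ ∀ x₀ ∈ K, f x₀ ∈ O → ∃ s : Finset (Set X), ↑s ⊆ ω ∧
      s.card ≤ m ∧ ∀ x ∈ K, f x ∈ O → dist (g x) (g x₀) < ε → x ∈ ⋃₀ (s : Set (Set X)) := by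
  set F : X → Y × Z := fun x => (f x, g x)
  have hF : Continuous F := hf.1.prodMk hg
  set C := F '' (K ∩ f ⁻¹' {y})
  have hC : IsCompact C := ((hf.2.2 y).inter_left hK).image hF
  set coverable := {U : Set (Y × Z) | IsOpen U ∧
    ∃ s : Finset (Set X), ↑s ⊆ ω ∧ s.card ≤ m ∧ K ∩ F ⁻¹' U ⊆ ⋃₀ (s : Set (Set X))}
  have hCcov : C ⊆ ⋃₀ coverable := by
    rintro c ⟨x, hx, rfl⟩
    obtain ⟨V, hV, s, hsω, hsm, hVs⟩ := hfg (F x) (mem_image_of_mem F hx.1)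
    exact ⟨interior V, ⟨isOpen_interior, s, hsω, hsm,
      (inter_subset_inter_right _ (preimage_mono interior_subset)).trans hVs⟩,
      mem_interior_iff_mem_nhds.2 hV⟩
  obtain ⟨δ, hδ, hleb⟩ := lebesgue_number_lemma_of_metric_sUnion hC (fun U hU => hU.1) hCcov
  have hnear : ∀ᶠ y' in 𝓝 y, dist y' y < δ / 4 ∧
      MapsTo F (K ∩ f ⁻¹' {y'}) (thickening (δ / 2) C) :=
    Eventually.and (ball_mem_nhds y (by positivity)) <| hf.2.1.eventually_mapsTo_fiber hF hK
      isOpen_thickening fun x hx => self_subset_thickening (half_pos hδ) C (mem_image_of_mem F hx)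
  obtain ⟨O, hO, hOo, hyO⟩ := _root_.eventually_nhds_iff.1 hnear
  refine ⟨δ / 2, half_pos hδ, O, hOo, hyO, fun x₀ hx₀K hx₀O => ?_⟩
  obtain ⟨c, hcC, hx₀c⟩ := mem_thickening_iff.1 ((hO _ hx₀O).2 ⟨hx₀K, rfl⟩)
  obtain ⟨U, ⟨-, s, hsω, hsm, hUs⟩, hcU⟩ := hleb c hcC
  refine ⟨s, hsω, hsm, fun x hxK hxO hx => hUs ⟨hxK, hcU ?_⟩⟩
  have hfx : dist (f x) (f x₀) < δ / 2 := by
    linarith [dist_triangle_right (f x) (f x₀) y, (hO _ hxO).1, (hO _ hx₀O).1]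
  have hFx : dist (F x) (F x₀) < δ / 2 := by
    rw [Prod.dist_eq]
    exact max_lt hfx hx
  calc dist (F x) c ≤ dist (F x) (F x₀) + dist (F x₀) c := dist_triangle _ _ _
    _ < δ / 2 + δ / 2 := add_lt_add hFx hx₀c
    _ = δ := add_halves δ

theorem exists_continuous_pos_lt_of_cover [TopologicalSpace Y] [NormalSpace Y]
    [ParacompactSpace Y] {ι : Type*} {O : ι → Set Y} {ε : ι → ℝ} (hO : ∀ i, IsOpen (O i))
    (hε : ∀ i, 0 < ε i) (hcov : ∀ y, ∃ i, y ∈ O i) :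
    ∃ β : C(Y, ℝ), ∀ y, 0 < β y ∧ ∃ i, y ∈ O i ∧ β y < ε i := by
  refine exists_continuous_forall_mem_convex_of_local_const
    (t := fun y => {b : ℝ | 0 < b ∧ ∃ i, y ∈ O i ∧ b < ε i}) (fun y => ?_) fun y => ?_
  · refine OrdConnected.convex ⟨fun a ha b hb c hc => ⟨ha.1.trans_le hc.1, ?_⟩⟩
    obtain ⟨i, hi, hbi⟩ := hb.2
    exact ⟨i, hi, hc.2.trans_lt hbi⟩
  · obtain ⟨i, hi⟩ := hcov y
    exact ⟨ε i / 2, eventually_of_mem ((hO i).mem_nhds hi) fun y' hy' =>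
      ⟨half_pos (hε i), i, hy', half_lt_self (hε i)⟩⟩

theorem isMOmegaMapOn_of_forall_dist_le [TopologicalSpace Y] {ι : Type*} {f : X → Y}
    {g h : X → Z} {β : Y → ℝ} {O : ι → Set Y} {ε : ι → ℝ} (hβ : Continuous β)
    (hO : ∀ i, IsOpen (O i))
    (hg : ∀ i, ∀ x₀ ∈ K, f x₀ ∈ O i → ∃ s : Finset (Set X), ↑s ⊆ ω ∧ s.card ≤ m ∧
      ∀ x ∈ K, f x ∈ O i → dist (g x) (g x₀) < ε i → x ∈ ⋃₀ (s : Set (Set X)))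
    (hβO : ∀ y, ∃ i, y ∈ O i ∧ β y < ε i / 3) (hgh : ∀ x, dist (g x) (h x) ≤ β (f x)) :
    IsMOmegaMapOn m ω (fun x => (f x, h x)) K := by
  rintro _ ⟨x₀, hx₀K, rfl⟩
  obtain ⟨i, hx₀O, hβx₀⟩ := hβO (f x₀)
  obtain ⟨s, hsω, hsm, hs⟩ := hg i x₀ hx₀K hx₀O
  have hV : IsOpen ((O i ∩ {y | β y < ε i / 3}) ×ˢ ball (h x₀) (ε i / 3)) :=
    ((hO i).inter (isOpen_lt hβ continuous_const)).prod isOpen_ball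
  refine ⟨_, hV.mem_nhds ⟨⟨hx₀O, hβx₀⟩, mem_ball_self ?_⟩, s, hsω, hsm, ?_⟩
  · linarith [(dist_nonneg.trans (hgh x₀)).trans_lt hβx₀]
  rintro x ⟨hxK, ⟨hxO, hβx⟩, hhx⟩
  refine hs x hxK hxO ?_
  calc dist (g x) (g x₀) ≤ dist (g x) (h x) + dist (h x) (h x₀) + dist (h x₀) (g x₀) :=
        dist_triangle4 _ _ _ _
    _ < ε i / 3 + ε i / 3 + ε i / 3 := by
        gcongr
        · exact (hgh x).trans_lt hβx
        · exact hhx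
        · exact (dist_comm (h x₀) (g x₀) ▸ hgh x₀).trans_lt hβx₀
    _ = ε i := by ring

end

theorem statement8_general {X Y : Type} [TopologicalSpace X] [TopologicalSpace Y]
    [TopologicalSpace.MetrizableSpace Y]
    (f : X → Y) (hperf : IsPerfectMap f)
    (ω : Set (Set X))
    (m p : ℕ) (K : Set X) (hK : IsClosed K) :
    letI : TopologicalSpace C(X, Cube p) := sourceLimitation X (Cube p)
    IsOpen {g : C(X, Cube p) | IsMOmegaMapOn m ω (fun x => (f x, g x)) K} := by
  intro g hg
  let : MetricSpace Y := TopologicalSpace.metrizableSpaceMetric Y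
  choose ε hε O hO hyO hcover using hg.exists_uniform_nhds hperf g.continuous hK
  obtain ⟨β, hβ⟩ := exists_continuous_pos_lt_of_cover hO (fun y => div_pos (hε y) three_pos)
    fun y => ⟨y, hyO y⟩
  exact ⟨β ∘ f, β.continuous.comp hperf.1, fun x => (hβ (f x)).1, fun h hgh =>
    isMOmegaMapOn_of_forall_dist_le β.continuous hO hcover (fun y => (hβ y).2) hgh⟩

/-- Lemma 2.4: let `f : X → Y` be a perfect continuous surjection of metrizable spaces, `ω` an
open cover of `X`, `m, p` positive integers. For any closed `K ⊆ X` the set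
`C_{(m,ω)}(X|K, I^p)` of all `g ∈ C(X, I^p)` with `(f △ g)|K` an `(m, ω)`-map is open in
`C(X, I^p)` with the source limitation topology. -/
theorem statement8 {X Y : Type} [TopologicalSpace X] [TopologicalSpace Y]
    [TopologicalSpace.MetrizableSpace X] [TopologicalSpace.MetrizableSpace Y]
    (f : X → Y) (hsurj : Function.Surjective f) (hperf : IsPerfectMap f)
    (ω : Set (Set X)) (hω : ∀ U ∈ ω, IsOpen U) (hcov : ⋃₀ ω = Set.univ)
    (m p : ℕ) (hm : 1 ≤ m) (hp : 1 ≤ p) (K : Set X) (hK : IsClosed K) :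
    letI : TopologicalSpace C(X, Cube p) := sourceLimitation X (Cube p)
    IsOpen {g : C(X, Cube p) | IsMOmegaMapOn m ω (fun x => (f x, g x)) K} :=
  statement8_general f hperf ω m p K hK
end

section
/- Let f : X → Y be a perfect k-dimensional continuous surjection of metrizable spaces with dim Y ≤ m, let p ≥ 1 be an integer, and let ω be an open cover of X. Equip C(X, I^{k+p}) with the uniform convergence topology. Then the set-valued map ψ from Y into C(X, I^{k+p}) defined by ψ(y) = C(X, I^{k+p}) \ {g ∈ C(X, I^{k+p}) : the restriction of f△g to f⁻¹(y) is an (m+k-p+2, ω)-map} has a closed graph in Y × C(X, I^{k+p}). -/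
open Set Topology

/-!
The set of `(y, g)` at which `(f △ g)|f⁻¹(y)` is an `(N, ω)`-map is open. At a good `(y₀, g₀)`,
each `x` in the compact fibre `F = f⁻¹(y₀)` has a radius `ε` such that the points of `F` which
`g₀` sends into `B(g₀ x, ε)` lie in the union of some `N` members of `ω`. Because `f` is closed,
this persists, with a smaller radius, on all fibres over a neighbourhood of `y₀`. Finitely many
balls of half these radii cover `g₀(F)`, and, `f` being closed again, they also cover the
`g₀`-image of every fibre over a neighbourhood of `y₀`. If `g` is uniformly `δ`-close to `g₀`,
where `6δ` is less than each of those radii, the triangle inequality shows that `(y, g)` is good.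
-/

open Filter Metric

variable {X Y M : Type} [TopologicalSpace X] [TopologicalSpace Y] [PseudoMetricSpace M]

lemma setOf_forall_dist_lt_mem_nhds_uniformConvergence (g₀ : C(X, M)) {δ : ℝ} (hδ : 0 < δ) :
    {g : C(X, M) | ∀ x, dist (g x) (g₀ x) < δ} ∈ @nhds _ (uniformConvergence X M) g₀ := by
  rw [uniformConvergence, nhds_induced, mem_comap]
  refine ⟨{u | (UniformFun.ofFun ⇑g₀, u) ∈ UniformFun.gen X M {q | dist q.1 q.2 < δ}},
    (UniformFun.hasBasis_nhds X M _).mem_of_mem (dist_mem_uniformity hδ), ?_⟩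
  intro g hg x
  exact (dist_comm (g₀ x) (g x) ▸ hg x : dist (g x) (g₀ x) < δ)

variable {f : X → Y} {ω : Set (Set X)} {n : ℕ}

lemma exists_eventually_fiber_inter_closedBall_subset (hf : IsClosedMap f)
    (hω : ∀ U ∈ ω, IsOpen U) {g : C(X, M)} {y₀ : Y}
    (hg : IsMOmegaMapOn n ω (fun x => (f x, g x)) (f ⁻¹' {y₀})) {x : X} (hx : x ∈ f ⁻¹' {y₀}) :
    ∃ ε > 0, ∃ s : Finset (Set X), ↑s ⊆ ω ∧ s.card ≤ n ∧
      ∀ᶠ y in 𝓝 y₀, f ⁻¹' {y} ∩ g ⁻¹' closedBall (g x) ε ⊆ ⋃₀ ↑s := by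
  obtain ⟨V, hV, s, hsω, hcard, hsub⟩ := hg _ (mem_image_of_mem _ hx)
  obtain ⟨u, hu, v, hv, huv⟩ := mem_nhds_prod_iff.mp hV
  obtain ⟨ε, hε, hball⟩ := Metric.mem_nhds_iff.mp hv
  refine ⟨ε / 2, half_pos hε, s, hsω, hcard, ?_⟩
  have hO : IsOpen ((g ⁻¹' closedBall (g x) (ε / 2))ᶜ ∪ ⋃₀ ↑s) :=
    (isClosed_closedBall.preimage g.continuous).isOpen_compl.union
      (isOpen_sUnion fun U hU => hω U (hsω hU))
  have hfibre : f ⁻¹' {y₀} ⊆ (g ⁻¹' closedBall (g x) (ε / 2))ᶜ ∪ ⋃₀ ↑s := by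
    intro x' hx'
    by_cases hx'B : x' ∈ g ⁻¹' closedBall (g x) (ε / 2)
    · have hdist : dist (g x') (g x) < ε := (mem_closedBall.mp hx'B).trans_lt (half_lt_self hε)
      have hfx' : f x' = f x := (hx' : f x' = y₀).trans (hx : f x = y₀).symm
      exact Or.inr (hsub ⟨hx', huv ⟨(hfx' ▸ mem_of_mem_nhds hu : f x' ∈ u), hball hdist⟩⟩)
    · exact Or.inl hx'B
  filter_upwards [hf.eventually_nhds_fiber y₀ fun x' hx' => hO.mem_nhds (hfibre hx')]
    with y hy x' ⟨hx'y, hx'B⟩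
  exact (hy x' hx'y).resolve_left (not_not.mpr hx'B)

theorem exists_pos_eventually_isMOmegaMapOn (hf : IsClosedMap f)
    (hfib : ∀ y, IsCompact (f ⁻¹' {y})) (hω : ∀ U ∈ ω, IsOpen U) {g₀ : C(X, M)} {y₀ : Y}
    (hg₀ : IsMOmegaMapOn n ω (fun x => (f x, g₀ x)) (f ⁻¹' {y₀})) :
    ∃ δ > 0, ∀ᶠ y in 𝓝 y₀, ∀ g : C(X, M), (∀ x, dist (g x) (g₀ x) < δ) →
      IsMOmegaMapOn n ω (fun x => (f x, g x)) (f ⁻¹' {y}) := by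
  choose! ε hε s hsω hcard hs using
    fun x (hx : x ∈ f ⁻¹' {y₀}) => exists_eventually_fiber_inter_closedBall_subset hf hω hg₀ hx
  obtain ⟨b, hbF, hbfin, hcover⟩ := (hfib y₀).elim_finite_subcover_image
    (c := fun i => g₀ ⁻¹' ball (g₀ i) (ε i / 2))
    (fun i _ => isOpen_ball.preimage g₀.continuous)
    (fun x hx => mem_biUnion hx (mem_ball_self (half_pos (hε x hx))))
  obtain ⟨δ, hδε, hδ⟩ : ∃ δ, (∀ i ∈ b, δ < ε i / 6) ∧ 0 < δ :=
    (((eventually_all_finite hbfin).mpr fun i hi =>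
      nhdsWithin_le_nhds (eventually_lt_nhds (by linarith [hε i (hbF hi)]))).and
        self_mem_nhdsWithin).exists (f := 𝓝[>] (0 : ℝ))
  have hO : IsOpen (⋃ i ∈ b, g₀ ⁻¹' ball (g₀ i) (ε i / 2)) :=
    isOpen_biUnion fun i _ => isOpen_ball.preimage g₀.continuous
  refine ⟨δ, hδ, ?_⟩
  filter_upwards [hf.eventually_nhds_fiber y₀ fun x hx => hO.mem_nhds (hcover hx),
    (eventually_all_finite hbfin).mpr fun i hi => hs i (hbF hi)]
    with y hyb hys g hg
  rintro _ ⟨x₀, hx₀, rfl⟩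
  obtain ⟨i, hib, hx₀i⟩ := mem_iUnion₂.mp (hyb x₀ hx₀)
  refine ⟨univ ×ˢ ball (g x₀) δ, prod_mem_nhds univ_mem (ball_mem_nhds _ hδ),
    s i, hsω i (hbF hib), hcard i (hbF hib), ?_⟩
  rintro x ⟨hx, -, hxx₀⟩
  refine hys i hib ⟨hx, mem_closedBall.mpr ?_⟩
  have := hδε i hib
  calc dist (g₀ x) (g₀ i)
      ≤ dist (g₀ x) (g x) + dist (g x) (g x₀) + dist (g x₀) (g₀ x₀) + dist (g₀ x₀) (g₀ i) :=
        by linarith [dist_triangle (g₀ x) (g₀ x₀) (g₀ i), dist_triangle4 (g₀ x) (g x) (g x₀) (g₀ x₀)]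
    _ ≤ δ + δ + δ + ε i / 2 := by
        gcongr
        exacts [(dist_comm (g₀ x) (g x) ▸ hg x).le, (mem_ball.mp hxx₀).le, (hg x₀).le,
          (mem_ball.mp hx₀i).le]
    _ ≤ ε i := by linarith

theorem isOpen_setOf_isMOmegaMapOn_fiber (hf : IsClosedMap f)
    (hfib : ∀ y, IsCompact (f ⁻¹' {y})) (hω : ∀ U ∈ ω, IsOpen U) :
    letI : TopologicalSpace C(X, M) := uniformConvergence X M
    IsOpen {yg : Y × C(X, M) | IsMOmegaMapOn n ω (fun x => (f x, yg.2 x)) (f ⁻¹' {yg.1})} := by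
  let _ : TopologicalSpace C(X, M) := uniformConvergence X M
  refine isOpen_iff_mem_nhds.mpr fun ⟨y₀, g₀⟩ hg₀ => ?_
  obtain ⟨δ, hδ, hgood⟩ := exists_pos_eventually_isMOmegaMapOn hf hfib hω hg₀
  filter_upwards [prod_mem_nhds hgood (setOf_forall_dist_lt_mem_nhds_uniformConvergence g₀ hδ)]
    with ⟨y, g⟩ ⟨hy, hg⟩
  exact hy g hg

theorem statement11_general {X Y : Type} [TopologicalSpace X] [TopologicalSpace Y]
    (f : X → Y) (hperf : IsPerfectMap f)
    (k m : ℕ)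
    (p : ℕ)
    (ω : Set (Set X)) (hω : ∀ U ∈ ω, IsOpen U) :
    letI : TopologicalSpace C(X, Cube (k + p)) := uniformConvergence X (Cube (k + p))
    IsClosed {yg : Y × C(X, Cube (k + p)) |
        ¬ IsMOmegaMapOn (((m : ℤ) + k - p + 2).toNat) ω
            (fun x => (f x, yg.2 x)) (f ⁻¹' {yg.1})} := by
  let _ : TopologicalSpace C(X, Cube (k + p)) := uniformConvergence X (Cube (k + p))
  exact (isOpen_setOf_isMOmegaMapOn_fiber hperf.2.1 hperf.2.2 hω).isClosed_compl

/-- Lemma 3.1: let `f : X → Y` be a perfect `k`-dimensional continuous surjection of metrizable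
spaces with `dim Y ≤ m`, `p ≥ 1` an integer, `ω` an open cover of `X`, and equip
`C(X, I^{k+p})` with the uniform convergence topology. The set-valued map
`ψ(y) = C(X, I^{k+p}) \ {g : (f △ g)|f⁻¹(y) is an (m+k-p+2, ω)-map}` has a closed graph. -/
theorem statement11 {X Y : Type} [TopologicalSpace X] [TopologicalSpace Y]
    [TopologicalSpace.MetrizableSpace X] [TopologicalSpace.MetrizableSpace Y]
    (f : X → Y) (hsurj : Function.Surjective f) (hperf : IsPerfectMap f)
    (k m : ℕ) (hdimf : DimFibersLE f k) (hdimY : CovDimLE Y m)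
    (p : ℕ) (hp : 1 ≤ p)
    (ω : Set (Set X)) (hω : ∀ U ∈ ω, IsOpen U) (hcov : ⋃₀ ω = Set.univ) :
    letI : TopologicalSpace C(X, Cube (k + p)) := uniformConvergence X (Cube (k + p))
    IsClosed {yg : Y × C(X, Cube (k + p)) |
        ¬ IsMOmegaMapOn (((m : ℤ) + k - p + 2).toNat) ω
            (fun x => (f x, yg.2 x)) (f ⁻¹' {yg.1})} :=
  statement11_general f hperf k m p ω hω
end

section
/- Let X be a metrizable space, A ⊆ X a closed subset, and n a positive integer. Then the restriction map π : C(X, I^n) → C(A, I^n), π(g) = g|A, is continuous, open, and surjective when both function spaces are equipped with the source limitation topology. -/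
open Set Topology

/-! Restriction is continuous because a positive continuous function on the closed set `A`
extends, by Tietze's theorem with values in `(0, ∞)`, to a positive continuous function on `X`.
It is open because, if `f` is `α / 2`-close to `g|A`, any Tietze extension `F` of `f` is
`α`-close to `g` on a neighbourhood `W` of `A`; interpolating `g` and `F` along the segment by
an Urysohn function that is `1` on `A` and `0` off `W` gives an extension of `f` that is
`α`-close to `g` everywhere, and convexity of `I^n` keeps it in the cube. Surjectivity is
Tietze's theorem for `I^n ≅ [0, 1]^n`. -/

namespace Cube

def homeomorphPi (n : ℕ) : Cube n ≃ₜ (Fin n → unitInterval) where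
  toFun x i := ⟨x.1 i, x.2 i⟩
  invFun y := ⟨WithLp.toLp 2 fun i => (y i : ℝ), fun i => (y i).2⟩
  left_inv _ := rfl
  right_inv _ := rfl
  continuous_toFun := by fun_prop
  continuous_invFun := by fun_prop

-- `Cube n` is `↥(carrier n)` only after unfolding `∈`, which instance search does not do.
abbrev carrier (n : ℕ) : Set (EuclideanSpace ℝ (Fin n)) := {x | ∀ i, x i ∈ Icc (0 : ℝ) 1}

instance (n : ℕ) : TietzeExtension.{0} (carrier n) := .of_homeo (homeomorphPi n)

theorem convex_carrier (n : ℕ) : Convex ℝ (carrier n) := by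
  intro x hx y hy a b ha hb hab i
  simpa using convex_Icc (0 : ℝ) 1 (hx i) (hy i) ha hb hab

end Cube

section SourceLimitation

variable {X : Type} [TopologicalSpace X] [NormalSpace X] {A : Set X}

theorem ContinuousMap.exists_restrict_eq_dist_lt {E : Type} [NormedAddCommGroup E]
    [NormedSpace ℝ E] {K : Set E} (hK : Convex ℝ K) [TietzeExtension.{0} K] (hA : IsClosed A)
    (g : C(X, K)) {α : X → ℝ} (hα : Continuous α) (hα0 : ∀ x, 0 < α x) (f : C(A, K))
    (hf : ∀ a : A, dist (g a) (f a) < α a) :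
    ∃ h : C(X, K), h.restrict A = f ∧ ∀ x, dist (g x) (h x) < α x := by
  obtain ⟨F, rfl⟩ := f.exists_restrict_eq hA
  set W := {x | dist (g x) (F x) < α x}
  have hW : IsOpen W := isOpen_lt (g.continuous.dist F.continuous) hα
  obtain ⟨t, ht0, ht1, ht⟩ := exists_continuous_zero_one_of_isClosed hW.isClosed_compl hA
    (disjoint_compl_left_iff_subset.mpr fun a ha => hf ⟨a, ha⟩)
  refine ⟨⟨fun x => ⟨AffineMap.lineMap (g x : E) (F x) (t x),
    hK.lineMap_mem (g x).2 (F x).2 (ht x)⟩, by fun_prop⟩, ?_, fun x => ?_⟩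
  · ext a : 1
    simp [ht1 a.2]
  · simp only [ContinuousMap.coe_mk, Subtype.dist_eq]
    rw [dist_left_lineMap, Real.norm_of_nonneg (ht x).1]
    by_cases hx : x ∈ W
    · exact (mul_le_of_le_one_left dist_nonneg (ht x).2).trans_lt hx
    · simpa [ht0 hx] using hα0 x

theorem continuous_restrict_sourceLimitation (M : Type) [MetricSpace M] (hA : IsClosed A) :
    Continuous[sourceLimitation X M, sourceLimitation A M]
      (fun g : C(X, M) => g.restrict A) := by
  rw [continuous_def]
  intro U hU g hg
  obtain ⟨α, hα, hα0, hαU⟩ := hU _ hg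
  obtain ⟨β, hβ0, hβ⟩ := ContinuousMap.exists_restrict_eq_forall_mem_of_closed
    ⟨α, hα⟩ (t := Ioi 0) hα0 nonempty_Ioi hA
  exact ⟨β, β.continuous, hβ0,
    fun h hh => hαU fun a => (hh a).trans_eq (DFunLike.congr_fun hβ a)⟩

theorem isOpenMap_restrict_sourceLimitation {E : Type} [NormedAddCommGroup E]
    [NormedSpace ℝ E] {K : Set E} (hK : Convex ℝ K) [TietzeExtension.{0} K] (hA : IsClosed A) :
    letI := sourceLimitation X K
    letI := sourceLimitation A K
    IsOpenMap (fun g : C(X, K) => g.restrict A) := by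
  rintro U hU - ⟨g, hgU, rfl⟩
  obtain ⟨α, hα, hα0, hαU⟩ := hU g hgU
  refine ⟨fun a => α a / 2, by fun_prop, fun a => half_pos (hα0 a), fun f hf => ?_⟩
  obtain ⟨h, rfl, hh⟩ := g.exists_restrict_eq_dist_lt hK hA hα hα0 f
    fun a => (hf a).trans_lt (half_lt_self (hα0 a))
  exact ⟨h, hαU fun x => (hh x).le, rfl⟩

end SourceLimitation

theorem statement14_general {X : Type} [TopologicalSpace X] [TopologicalSpace.MetrizableSpace X]
    (A : Set X) (hA : IsClosed A) (n : ℕ) :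
    letI : TopologicalSpace C(X, Cube n) := sourceLimitation X (Cube n)
    letI : TopologicalSpace C(↥A, Cube n) := sourceLimitation ↥A (Cube n)
    Continuous (fun g : C(X, Cube n) => g.restrict A) ∧
    IsOpenMap (fun g : C(X, Cube n) => g.restrict A) ∧
    Function.Surjective (fun g : C(X, Cube n) => g.restrict A) := by
  exact ⟨continuous_restrict_sourceLimitation _ hA,
    isOpenMap_restrict_sourceLimitation (K := Cube.carrier n) (Cube.convex_carrier n) hA,
    fun f => ContinuousMap.exists_restrict_eq (Y := Cube.carrier n) hA f⟩

/-- For a metrizable space `X`, a closed subset `A ⊆ X` and a positive integer `n`, the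
restriction map `π : C(X, I^n) → C(A, I^n)`, `π(g) = g|A`, is continuous, open and surjective
when both function spaces carry the source limitation topology. -/
theorem statement14 {X : Type} [TopologicalSpace X] [TopologicalSpace.MetrizableSpace X]
    (A : Set X) (hA : IsClosed A) (n : ℕ) (hn : 1 ≤ n) :
    letI : TopologicalSpace C(X, Cube n) := sourceLimitation X (Cube n)
    letI : TopologicalSpace C(↥A, Cube n) := sourceLimitation ↥A (Cube n)
    Continuous (fun g : C(X, Cube n) => g.restrict A) ∧
    IsOpenMap (fun g : C(X, Cube n) => g.restrict A) ∧
    Function.Surjective (fun g : C(X, Cube n) => g.restrict A) :=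
  statement14_general A hA n
end
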